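/- In the exponential-activation setup, for any ε > 0 and δ ∈ (0,1), suppose D ≥ 2048·ln(6m/ε), D ≥ 2048·ln(6m/δ), D ≥ 6·ln(2m), and m > 8·ln(6/δ). Then with probability at least 1 − δ over the draw of S ~ 𝒟^m, the learned hypothesis satisfies Pr_{(z,y)~𝒟}[y·h_S(z) < 1] ≤ ε; in particular its 0-1 test error is at most ε. -/

import Mathlib

/-!
With probability at least `1 - δ` the sample contains both labels and every noise vector
`x₂⁽ⁱ⁾` has squared norm in `[29D/32, 35D/32]`: the latter by Chernoff bounds for the χ²
distribution, the former because a label is missing with probability `2⁻ᵐ` only. Fix such a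
sample. Off an event of probability at most `ε`, a test point `(y • u, x₂)` has
`|⟪x₂, x₂⁽ⁱ⁾⟫| ≤ 7D/192` for all `i` (a Gaussian tail bound for each `i`). The terms of
`y h_S(y • u, x₂)` coming from examples with label `y` carry the extra factor
`exp ‖u‖² = exp (D/4)`; given the bounds on the noise, one of them is at least `exp (D/6) ≥ 2m`
times the absolute value of any term of the other label, so it outweighs all of them and
`y h_S ≥ 1`.
-/

open MeasureTheory ProbabilityTheory
open scoped ENNReal NNReal

noncomputable section

namespace ExpExample

/-- Squared Euclidean norm on `Fin n → ℝ`. -/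
def sqnorm {n : ℕ} (v : Fin n → ℝ) : ℝ := ∑ i, v i ^ 2

/-- An example: an input `(x₁, x₂) ∈ ℝ^D × ℝ^D` together with a real label. -/
abbrev Ex (D : ℕ) := ((Fin D → ℝ) × (Fin D → ℝ)) × ℝ

/-- The noise distribution: `D` i.i.d. standard Gaussian `N(0,1)` coordinates. -/
def noise (D : ℕ) : Measure (Fin D → ℝ) :=
  Measure.pi fun _ => gaussianReal 0 1

/-- The data distribution `𝒟`: label `y` uniform on `{-1,1}`; given `y`,
`x₁ = y·u` and `x₂ ~ N(0, I)`. -/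
def μD (D : ℕ) (u : Fin D → ℝ) : Measure (Ex D) :=
  (1/2 : ℝ≥0∞) • (noise D).map (fun x₂ => ((u, x₂), (1 : ℝ))) +
  (1/2 : ℝ≥0∞) • (noise D).map (fun x₂ => ((-u, x₂), (-1 : ℝ)))

/-- Distribution of an i.i.d. `m`-sample from `𝒟`. -/
def μS (D m : ℕ) (u : Fin D → ℝ) : Measure (Fin m → Ex D) :=
  Measure.pi fun _ => μD D u

/-- The hypothesis learned on `S`:
`h_S(z) = Σᵢ y⁽ⁱ⁾·exp(‖(z + x⁽ⁱ⁾)/2‖₂²)`, where the squared norm on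
`ℝ^{2D} = ℝ^D × ℝ^D` is the sum of the squared norms of the two components. -/
def alg (D m : ℕ) (S : Fin m → Ex D) : (Fin D → ℝ) × (Fin D → ℝ) → ℝ :=
  fun z => ∑ i, (S i).2 *
    Real.exp (sqnorm ((1/2 : ℝ) • (z.1 + (S i).1.1)) +
              sqnorm ((1/2 : ℝ) • (z.2 + (S i).1.2)))

/-- The ramp loss `L^{(γ)}`. -/
def ramp (γ y' y : ℝ) : ℝ :=
  if y * y' ≤ 0 then 1 else if γ ≤ y * y' then 0 else 1 - y * y' / γ

/-- Expected (test) loss of a hypothesis. -/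
def testLoss (D : ℕ) (u : Fin D → ℝ) (γ : ℝ)
    (h : (Fin D → ℝ) × (Fin D → ℝ) → ℝ) : ℝ :=
  ∫ z, ramp γ (h z.1) z.2 ∂(μD D u)

/-- Empirical loss of a hypothesis on a sample `S`. -/
def empLoss (D m : ℕ) (γ : ℝ) (h : (Fin D → ℝ) × (Fin D → ℝ) → ℝ)
    (S : Fin m → Ex D) : ℝ :=
  (1 / (m : ℝ)) * ∑ i, ramp γ (h (S i).1) (S i).2

/-- The generalization error `ε_gen(m,δ)` of the algorithm w.r.t. `L^{(γ)}`. -/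
def genErr (D m : ℕ) (u : Fin D → ℝ) (γ δ : ℝ) : ℝ :=
  sInf {ε : ℝ | 0 ≤ ε ∧
    ENNReal.ofReal (1 - δ) ≤
      μS D m u {S | testLoss D u γ (alg D m S)
        - empLoss D m γ (alg D m S) S ≤ ε}}

/-- The tightest algorithm-dependent uniform convergence bound `ε_unif-alg(m,δ)`
w.r.t. `L^{(γ)}`. -/
def unifAlg (D m : ℕ) (u : Fin D → ℝ) (γ δ : ℝ) : ℝ :=
  sInf {ε : ℝ | 0 ≤ ε ∧
    ∃ 𝒮 : Set (Fin m → Ex D), MeasurableSet 𝒮 ∧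
      ENNReal.ofReal (1 - δ) ≤ μS D m u 𝒮 ∧
      ∀ S ∈ 𝒮, ∀ S' ∈ 𝒮,
        |testLoss D u γ (alg D m S') - empLoss D m γ (alg D m S') S| ≤ ε}

end ExpExample

open Real

lemma exp_quadratic_eq_mul_exp_sq {b : ℝ} (hb : b ≠ 0) (c y : ℝ) :
    exp (-b * y ^ 2 + c * y) = exp (c ^ 2 / (4 * b)) * exp (-b * (y - c / (2 * b)) ^ 2) := by
  rw [← exp_add]; congr 1; field_simp; ring

lemma integrable_exp_quadratic {b : ℝ} (hb : 0 < b) (c : ℝ) :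
    Integrable fun y : ℝ ↦ exp (-b * y ^ 2 + c * y) := by
  simp_rw [exp_quadratic_eq_mul_exp_sq hb.ne']
  exact ((integrable_exp_neg_mul_sq hb).comp_sub_right _).const_mul _

lemma integral_exp_quadratic {b : ℝ} (hb : 0 < b) (c : ℝ) :
    ∫ y : ℝ, exp (-b * y ^ 2 + c * y) = √(π / b) * exp (c ^ 2 / (4 * b)) := by
  simp_rw [exp_quadratic_eq_mul_exp_sq hb.ne']
  rw [integral_const_mul, integral_sub_right_eq_self (fun y ↦ exp (-b * y ^ 2)), integral_gaussian,
    mul_comm]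

lemma gaussianPDFReal_mul_exp_quadratic (t c y : ℝ) :
    gaussianPDFReal 0 1 y * exp (t * y ^ 2 + c * y)
      = (√(2 * π))⁻¹ * exp (-(1 / 2 - t) * y ^ 2 + c * y) := by
  rw [gaussianPDFReal_def, mul_assoc, ← exp_add]
  congr 2
  · simp
  · push_cast; ring

lemma integrable_exp_quadratic_gaussianReal {t : ℝ} (ht : t < 1 / 2) (c : ℝ) :
    Integrable (fun y ↦ exp (t * y ^ 2 + c * y)) (gaussianReal 0 1) := by
  rw [gaussianReal_of_var_ne_zero 0 one_ne_zero,
    integrable_withDensity_iff_integrable_smul' (measurable_gaussianPDF 0 1)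
      (ae_of_all _ fun _ ↦ gaussianPDF_lt_top)]
  simp_rw [toReal_gaussianPDF, smul_eq_mul, gaussianPDFReal_mul_exp_quadratic]
  exact (integrable_exp_quadratic (by linarith) c).const_mul _

lemma integral_exp_quadratic_gaussianReal {t : ℝ} (ht : t < 1 / 2) (c : ℝ) :
    ∫ y, exp (t * y ^ 2 + c * y) ∂gaussianReal 0 1
      = (√(1 - 2 * t))⁻¹ * exp (c ^ 2 / (2 * (1 - 2 * t))) := by
  have hb : 0 < 1 / 2 - t := by linarith
  rw [integral_gaussianReal_eq_integral_smul one_ne_zero]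
  simp_rw [smul_eq_mul, gaussianPDFReal_mul_exp_quadratic, integral_const_mul,
    integral_exp_quadratic hb]
  have h2 : 1 - 2 * t = 2 * (1 / 2 - t) := by ring
  rw [← mul_assoc, h2, ← sqrt_inv, ← sqrt_inv, ← sqrt_mul (by positivity)]
  congr 3
  · field_simp
  · ring

lemma measureReal_pi_le_exp_neg_mul_prod_integral {ι : Type*} [Fintype ι] {Ω : ι → Type*}
    [∀ i, MeasurableSpace (Ω i)] (ν : ∀ i, Measure (Ω i)) [∀ i, IsProbabilityMeasure (ν i)]
    {g : ∀ i, Ω i → ℝ} (hg : ∀ i, Integrable (fun y ↦ exp (g i y)) (ν i)) (a : ℝ) :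
    (Measure.pi ν).real {x | a ≤ ∑ i, g i (x i)} ≤ exp (-a) * ∏ i, ∫ y, exp (g i y) ∂ν i := by
  have hint : Integrable (fun x : ∀ i, Ω i ↦ exp (1 * ∑ i, g i (x i))) (Measure.pi ν) := by
    simp_rw [one_mul, exp_sum]
    exact Integrable.fintype_prod_dep hg
  have hmgf := measure_ge_le_exp_mul_mgf a zero_le_one hint
  simp_rw [mgf, one_mul, exp_sum] at hmgf
  rwa [integral_fintype_prod_eq_prod (fun i y ↦ exp (g i y)), neg_one_mul] at hmgf

lemma exp_neg_mul_inv_sqrt_pow_le {x b : ℝ} (hx : 0 < x) (h : x⁻¹ ≤ exp (2 * b)) (a : ℝ)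
    (D : ℕ) : exp (-a) * (√x)⁻¹ ^ D ≤ exp (-a + D * b) := by
  have hsqrt : (√x)⁻¹ ≤ exp b := by
    rw [← sqrt_inv, ← sqrt_sq (exp_pos b).le, sq, ← exp_add, ← two_mul]
    exact sqrt_le_sqrt h
  rw [exp_add, exp_nat_mul]
  gcongr

lemma nat_mul_two_mul_exp_neg_le {m D : ℕ} {η : ℝ} (hη : 0 < η)
    (hD : 2048 * log (6 * m / η) ≤ D) : m * (2 * exp (-D / 2048)) ≤ η / 3 := by
  rcases Nat.eq_zero_or_pos m with rfl | hm
  · simp; positivity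
  have hm : (0 : ℝ) < m := by exact_mod_cast hm
  have hexp : 6 * m / η ≤ exp (D / 2048) := by
    rw [← exp_log (by positivity : 0 < 6 * m / η), exp_le_exp]; linarith
  have : exp (-D / 2048) ≤ η / (6 * m) := by
    rw [neg_div, exp_neg, inv_le_comm₀ (exp_pos _) (by positivity), inv_div]
    exact hexp
  calc (m : ℝ) * (2 * exp (-D / 2048)) ≤ m * (2 * (η / (6 * m))) := by gcongr
    _ = η / 3 := by field_simp; ring

lemma half_pow_le {m : ℕ} {δ : ℝ} (hδ : 0 < δ) (hm : 8 * log (6 / δ) < m) :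
    (1 / 2 : ℝ) ^ m ≤ δ / 6 := by
  have hlog : log (6 / δ) < log (2 ^ m) := by
    rw [log_pow]; nlinarith [log_two_gt_d9, (Nat.cast_nonneg m : (0 : ℝ) ≤ m)]
  have h2m : 6 / δ < 2 ^ m := (log_lt_log_iff (by positivity) (by positivity)).1 hlog
  rw [div_pow, one_pow, one_div, inv_le_comm₀ (by positivity) (by positivity), inv_div]
  exact h2m.le

lemma ofReal_one_sub_le_of_measureReal_compl_le {α : Type*} [MeasurableSpace α]
    {μ : Measure α} [IsProbabilityMeasure μ] {s : Set α} {δ : ℝ} (h : μ.real sᶜ ≤ δ) :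
    ENNReal.ofReal (1 - δ) ≤ μ s := by
  rw [← ofReal_measureReal]
  refine ENNReal.ofReal_le_ofReal ?_
  have := measureReal_union_le (μ := μ) s sᶜ
  rw [Set.union_compl_self, probReal_univ] at this
  linarith

lemma sub_card_sub_one_mul_le_sum {ι : Type*} [Fintype ι] {f : ι → ℝ} {L U : ℝ} {i₀ : ι}
    (h₀ : L ≤ f i₀) (h : ∀ i, -U ≤ f i) : L - (Fintype.card ι - 1) * U ≤ ∑ i, f i := by
  have hsingle : f i₀ + U ≤ ∑ i, (f i + U) :=
    Finset.single_le_sum (f := fun i ↦ f i + U) (fun i _ ↦ by linarith [h i])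
      (Finset.mem_univ i₀)
  rw [Finset.sum_add_distrib, Finset.sum_const, Finset.card_univ, nsmul_eq_mul] at hsingle
  linarith

namespace ExpExample

lemma sqnorm_nonneg {n : ℕ} (v : Fin n → ℝ) : 0 ≤ sqnorm v :=
  Finset.sum_nonneg fun _ _ ↦ sq_nonneg _

lemma sqnorm_smul {n : ℕ} (c : ℝ) (v : Fin n → ℝ) : sqnorm (c • v) = c ^ 2 * sqnorm v := by
  simp only [sqnorm, Finset.mul_sum, Pi.smul_apply, smul_eq_mul, mul_pow]

lemma sqnorm_neg {n : ℕ} (v : Fin n → ℝ) : sqnorm (-v) = sqnorm v := by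
  simp [sqnorm]

lemma sqnorm_half_smul_add {n : ℕ} (v w : Fin n → ℝ) :
    sqnorm ((1 / 2 : ℝ) • (v + w)) = sqnorm v / 4 + v ⬝ᵥ w / 2 + sqnorm w / 4 := by
  simp only [sqnorm, dotProduct, Finset.sum_div, ← Finset.sum_add_distrib]
  exact Finset.sum_congr rfl fun i _ ↦ by simp only [Pi.smul_apply, Pi.add_apply, smul_eq_mul]; ring

@[fun_prop]
lemma continuous_sqnorm {n : ℕ} : Continuous (sqnorm (n := n)) := by
  unfold sqnorm; fun_prop

instance (D : ℕ) : IsProbabilityMeasure (noise D) := by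
  unfold noise; infer_instance

lemma noise_real_quadratic_ge_le {D : ℕ} {t : ℝ} (ht : t < 1 / 2) (c : Fin D → ℝ) (a : ℝ) :
    (noise D).real {x | a ≤ t * sqnorm x + c ⬝ᵥ x}
      ≤ exp (-a) * (√(1 - 2 * t))⁻¹ ^ D * exp (sqnorm c / (2 * (1 - 2 * t))) := by
  have hsum (x : Fin D → ℝ) : t * sqnorm x + c ⬝ᵥ x = ∑ i, (t * x i ^ 2 + c i * x i) := by
    simp only [sqnorm, dotProduct, Finset.mul_sum, Finset.sum_add_distrib]
  simp_rw [hsum]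
  refine (measureReal_pi_le_exp_neg_mul_prod_integral _
    (fun i ↦ integrable_exp_quadratic_gaussianReal ht (c i)) a).trans_eq ?_
  simp_rw [integral_exp_quadratic_gaussianReal ht, Finset.prod_mul_distrib, Finset.prod_const,
    Finset.card_univ, Fintype.card_fin, ← exp_sum, ← Finset.sum_div, sqnorm, mul_assoc]

lemma noise_real_sqnorm_ge_le (D : ℕ) :
    (noise D).real {x | 35 * D / 32 ≤ sqnorm x} ≤ exp (-D / 2048) := by
  have hx : ((15 : ℝ) / 16)⁻¹ ≤ exp (2 * (69 / 2048)) := by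
    linarith [add_one_le_exp (2 * (69 / 2048) : ℝ)]
  calc (noise D).real {x | 35 * D / 32 ≤ sqnorm x}
      ≤ (noise D).real {x | 35 * D / 1024 ≤ 1 / 32 * sqnorm x + 0 ⬝ᵥ x} :=
        measureReal_mono <| Set.ofPred_subset_ofPred.2 fun x h ↦ by rw [zero_dotProduct]; linarith
    _ ≤ exp (-(35 * D / 1024)) * (√(15 / 16))⁻¹ ^ D := by
        refine (noise_real_quadratic_ge_le (by norm_num) 0 _).trans_eq ?_
        norm_num [sqnorm]
    _ ≤ exp (-D / 2048) := by
        refine (exp_neg_mul_inv_sqrt_pow_le (by norm_num) hx _ D).trans_eq ?_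
        congr 1; ring

lemma noise_real_sqnorm_le_le (D : ℕ) :
    (noise D).real {x | sqnorm x ≤ 29 * D / 32} ≤ exp (-D / 2048) := by
  have hx : ((17 : ℝ) / 16)⁻¹ ≤ exp (2 * (-59 / 2048)) := by
    linarith [add_one_le_exp (2 * (-59 / 2048) : ℝ)]
  calc (noise D).real {x | sqnorm x ≤ 29 * D / 32}
      ≤ (noise D).real {x | -(29 * D / 1024) ≤ -1 / 32 * sqnorm x + 0 ⬝ᵥ x} :=
        measureReal_mono <| Set.ofPred_subset_ofPred.2 fun x h ↦ by rw [zero_dotProduct]; linarith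
    _ ≤ exp (-(-(29 * D / 1024))) * (√(17 / 16))⁻¹ ^ D := by
        refine (noise_real_quadratic_ge_le (by norm_num) 0 _).trans_eq ?_
        norm_num [sqnorm]
    _ ≤ exp (-D / 2048) := by
        refine (exp_neg_mul_inv_sqrt_pow_le (by norm_num) hx _ D).trans_eq ?_
        congr 1; ring

lemma noise_real_dotProduct_ge_le {D : ℕ} {w : Fin D → ℝ} (hw : sqnorm w ≤ 35 * D / 32) :
    (noise D).real {x | 7 * D / 192 ≤ w ⬝ᵥ x} ≤ exp (-D / 2048) := by
  calc (noise D).real {x | 7 * D / 192 ≤ w ⬝ᵥ x}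
      ≤ (noise D).real {x | 7 * D / 5760 ≤ 0 * sqnorm x + ((1 / 30 : ℝ) • w) ⬝ᵥ x} :=
        measureReal_mono <| Set.ofPred_subset_ofPred.2 fun x h ↦ by
          rw [smul_dotProduct, smul_eq_mul]; linarith
    _ ≤ exp (-(7 * D / 5760)) * exp (sqnorm w / 1800) := by
        refine (noise_real_quadratic_ge_le (by norm_num) _ _).trans_eq ?_
        rw [sqnorm_smul]; norm_num; ring_nf
    _ ≤ exp (-D / 2048) := by
        rw [← exp_add, exp_le_exp]; linarith [(Nat.cast_nonneg D : (0 : ℝ) ≤ D)]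

lemma noise_real_sqnorm_notMem_Icc_le (D : ℕ) :
    (noise D).real {x | sqnorm x ∉ Set.Icc (29 * D / 32 : ℝ) (35 * D / 32)}
      ≤ 2 * exp (-D / 2048) := by
  have hsub : {x : Fin D → ℝ | sqnorm x ∉ Set.Icc (29 * D / 32 : ℝ) (35 * D / 32)}
      ⊆ {x | sqnorm x ≤ 29 * D / 32} ∪ {x | 35 * D / 32 ≤ sqnorm x} := fun x hx ↦ by
    simp only [Set.mem_ofPred_eq, Set.mem_Icc, not_and_or, not_le] at hx
    exact hx.imp le_of_lt le_of_lt
  calc _ ≤ _ := measureReal_mono hsub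
    _ ≤ _ := measureReal_union_le _ _
    _ ≤ _ := by linarith [noise_real_sqnorm_le_le D, noise_real_sqnorm_ge_le D]

lemma noise_real_abs_dotProduct_ge_le {D : ℕ} {w : Fin D → ℝ} (hw : sqnorm w ≤ 35 * D / 32) :
    (noise D).real {x | 7 * D / 192 ≤ |w ⬝ᵥ x|} ≤ 2 * exp (-D / 2048) := by
  have hsub : {x : Fin D → ℝ | 7 * D / 192 ≤ |w ⬝ᵥ x|}
      ⊆ {x | 7 * D / 192 ≤ w ⬝ᵥ x} ∪ {x | 7 * D / 192 ≤ (-w) ⬝ᵥ x} := fun x hx ↦ by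
    rwa [Set.mem_ofPred_eq, le_abs, ← neg_dotProduct] at hx
  calc _ ≤ _ := measureReal_mono hsub
    _ ≤ _ := measureReal_union_le _ _
    _ ≤ _ := by
      linarith [noise_real_dotProduct_ge_le hw,
        noise_real_dotProduct_ge_le (w := -w) (by rwa [sqnorm_neg])]

lemma measurable_μD_branch {D : ℕ} (v : Fin D → ℝ) (y : ℝ) :
    Measurable fun x₂ : Fin D → ℝ ↦ (((v, x₂), y) : Ex D) := by
  fun_prop

lemma μD_apply {D : ℕ} (u : Fin D → ℝ) {B : Set (Ex D)} (hB : MeasurableSet B) :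
    μD D u B = 2⁻¹ * noise D ((fun x₂ ↦ ((u, x₂), 1)) ⁻¹' B)
      + 2⁻¹ * noise D ((fun x₂ ↦ ((-u, x₂), -1)) ⁻¹' B) := by
  rw [μD, Measure.add_apply, Measure.smul_apply, Measure.smul_apply,
    Measure.map_apply (measurable_μD_branch _ _) hB,
    Measure.map_apply (measurable_μD_branch _ _) hB, smul_eq_mul, smul_eq_mul, one_div]

instance {D : ℕ} (u : Fin D → ℝ) : IsProbabilityMeasure (μD D u) :=
  ⟨by simp [μD_apply u MeasurableSet.univ, ENNReal.inv_two_add_inv_two]⟩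

instance {D m : ℕ} (u : Fin D → ℝ) : IsProbabilityMeasure (μS D m u) := by
  unfold μS; infer_instance

lemma μD_real_le_average_noise_real {D : ℕ} (u : Fin D → ℝ) {B : Set (Ex D)}
    (hB : MeasurableSet B)
    {Cpos Cneg : Set (Fin D → ℝ)} (hpos : ∀ x₂, ((u, x₂), 1) ∈ B → x₂ ∈ Cpos)
    (hneg : ∀ x₂, ((-u, x₂), -1) ∈ B → x₂ ∈ Cneg) :
    (μD D u).real B ≤ ((noise D).real Cpos + (noise D).real Cneg) / 2 := by
  have h : μD D u B ≤ 2⁻¹ * noise D Cpos + 2⁻¹ * noise D Cneg := by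
    rw [μD_apply u hB]
    gcongr
    exacts [hpos, hneg]
  have hreal := ENNReal.toReal_mono (by finiteness) h
  rw [ENNReal.toReal_add (by finiteness) (by finiteness), ENNReal.toReal_mul,
    ENNReal.toReal_mul, ENNReal.toReal_inv, ENNReal.toReal_ofNat] at hreal
  simp only [measureReal_def]
  linarith

def typicalExamples (D : ℕ) (u : Fin D → ℝ) : Set (Ex D) :=
  {e | (e.2 = 1 ∨ e.2 = -1) ∧ e.1.1 = e.2 • u ∧
    sqnorm e.1.2 ∈ Set.Icc (29 * D / 32 : ℝ) (35 * D / 32)}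

def typicalSamples (D m : ℕ) (u : Fin D → ℝ) : Set (Fin m → Ex D) :=
  {S | (∀ i, S i ∈ typicalExamples D u) ∧ (∃ i, (S i).2 = 1) ∧ ∃ i, (S i).2 = -1}

lemma isClosed_typicalExamples (D : ℕ) (u : Fin D → ℝ) : IsClosed (typicalExamples D u) :=
  ((isClosed_eq (by fun_prop) (by fun_prop)).union (isClosed_eq (by fun_prop) (by fun_prop))).inter
    ((isClosed_eq (by fun_prop) (by fun_prop)).inter (isClosed_Icc.preimage (by fun_prop)))

lemma μD_real_typicalExamples_compl_le (D : ℕ) (u : Fin D → ℝ) :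
    (μD D u).real (typicalExamples D u)ᶜ ≤ 2 * exp (-D / 2048) := by
  set C := {x : Fin D → ℝ | sqnorm x ∉ Set.Icc (29 * D / 32 : ℝ) (35 * D / 32)}
  have hle := μD_real_le_average_noise_real u (isClosed_typicalExamples D u).measurableSet.compl
    (Cpos := C) (Cneg := C)
    (fun x₂ hx hmem ↦ hx ⟨Or.inl rfl, (one_smul ℝ u).symm, hmem⟩)
    (fun x₂ hx hmem ↦ hx ⟨Or.inr rfl, (neg_one_smul ℝ u).symm, hmem⟩)
  linarith [noise_real_sqnorm_notMem_Icc_le D]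

lemma μD_real_label_ne_le {D : ℕ} (u : Fin D → ℝ) {y : ℝ} (hy : y = 1 ∨ y = -1) :
    (μD D u).real {e | e.2 ≠ y} ≤ 1 / 2 := by
  have hB : MeasurableSet {e : Ex D | e.2 ≠ y} :=
    (measurableSet_singleton y).compl.preimage measurable_snd
  rcases hy with rfl | rfl
  · simpa using μD_real_le_average_noise_real u hB (Cpos := ∅) (Cneg := Set.univ)
      (fun _ h ↦ h rfl) (fun _ _ ↦ trivial)
  · simpa using μD_real_le_average_noise_real u hB (Cpos := Set.univ) (Cneg := ∅)
      (fun _ _ ↦ trivial) (fun _ h ↦ h rfl)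

lemma μS_real_eval_preimage {D m : ℕ} (u : Fin D → ℝ) (i : Fin m) {A : Set (Ex D)}
    (hA : MeasurableSet A) : (μS D m u).real (Function.eval i ⁻¹' A) = (μD D u).real A :=
  (measurePreserving_eval _ i).measureReal_preimage hA.nullMeasurableSet

lemma μS_real_univ_pi {D m : ℕ} (u : Fin D → ℝ) (A : Set (Ex D)) :
    (μS D m u).real (Set.univ.pi fun _ ↦ A) = (μD D u).real A ^ m := by
  simp [measureReal_def, μS, Measure.pi_pi]

lemma μS_real_typicalSamples_compl_le {D m : ℕ} (u : Fin D → ℝ) {δ : ℝ} (hδ : 0 < δ)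
    (hD : 2048 * log (6 * m / δ) ≤ D) (hm : 8 * log (6 / δ) < m) :
    (μS D m u).real (typicalSamples D m u)ᶜ ≤ δ := by
  have hsub : (typicalSamples D m u)ᶜ ⊆ (⋃ i, Function.eval i ⁻¹' (typicalExamples D u)ᶜ)
      ∪ ((Set.univ.pi fun _ ↦ {e : Ex D | e.2 ≠ 1}) ∪ Set.univ.pi fun _ ↦ {e | e.2 ≠ -1}) := by
    intro S hS
    simp only [typicalSamples, Set.mem_compl_iff, Set.mem_ofPred_eq, not_and_or, not_forall,
      not_exists] at hS
    rcases hS with ⟨i, hi⟩ | h | h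
    · exact Or.inl (Set.mem_iUnion.2 ⟨i, hi⟩)
    · exact Or.inr (Or.inl (Set.mem_univ_pi.2 h))
    · exact Or.inr (Or.inr (Set.mem_univ_pi.2 h))
  have hunion : (μS D m u).real (⋃ i, Function.eval i ⁻¹' (typicalExamples D u)ᶜ)
      ≤ m * (2 * exp (-D / 2048)) := by
    refine (measureReal_iUnion_fintype_le _).trans ?_
    simp_rw [μS_real_eval_preimage u _ (isClosed_typicalExamples D u).measurableSet.compl]
    rw [Finset.sum_const, Finset.card_univ, Fintype.card_fin, nsmul_eq_mul]
    gcongr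
    exact μD_real_typicalExamples_compl_le D u
  have hlabel {y : ℝ} (hy : y = 1 ∨ y = -1) :
      (μS D m u).real (Set.univ.pi fun _ ↦ {e : Ex D | e.2 ≠ y}) ≤ δ / 6 := by
    rw [μS_real_univ_pi]
    exact (pow_le_pow_left₀ measureReal_nonneg (μD_real_label_ne_le u hy) m).trans
      (half_pow_le hδ hm)
  calc _ ≤ _ := measureReal_mono hsub
    _ ≤ _ := (measureReal_union_le _ _).trans (add_le_add_right (measureReal_union_le _ _) _)
    _ ≤ δ / 3 + (δ / 6 + δ / 6) := by
      gcongr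
      exacts [hunion.trans (nat_mul_two_mul_exp_neg_le hδ hD), hlabel (Or.inl rfl),
        hlabel (Or.inr rfl)]
    _ ≤ δ := by linarith

lemma label_mul_term_eq {D : ℕ} {y y' : ℝ} (hy : y = 1 ∨ y = -1) (hy' : y' = 1 ∨ y' = -1)
    (v : Fin D → ℝ) (Q : ℝ) :
    y * (y' * exp (sqnorm ((1 / 2 : ℝ) • (y • v + y' • v)) + Q))
      = if y' = y then exp (sqnorm v + Q) else -exp Q := by
  rw [← add_smul, smul_smul, sqnorm_smul]
  rcases hy with rfl | rfl <;> rcases hy' with rfl | rfl <;> norm_num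

lemma sqnorm_half_smul_add_mem_Icc {D : ℕ} {x w : Fin D → ℝ} (hxw : |x ⬝ᵥ w| ≤ 7 * D / 192)
    (hw : sqnorm w ∈ Set.Icc (29 * D / 32 : ℝ) (35 * D / 32)) :
    sqnorm ((1 / 2 : ℝ) • (x + w)) ∈ Set.Icc (sqnorm x / 4 - 7 * D / 384 + 29 * D / 128)
      (sqnorm x / 4 + 7 * D / 384 + 35 * D / 128) := by
  rw [sqnorm_half_smul_add]
  obtain ⟨hlo, hhi⟩ := abs_le.1 hxw
  exact ⟨by linarith [hw.1], by linarith [hw.2]⟩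

lemma one_le_label_mul_alg {D m : ℕ} {u : Fin D → ℝ} (hu : sqnorm u = D / 4)
    (hD : 6 * log (2 * m) ≤ D) {S : Fin m → Ex D} (hS : S ∈ typicalSamples D m u)
    {x₂ : Fin D → ℝ} (hx₂ : ∀ i, |x₂ ⬝ᵥ (S i).1.2| ≤ 7 * D / 192) {y : ℝ} (hy : y = 1 ∨ y = -1) :
    1 ≤ y * alg D m S (y • u, x₂) := by
  obtain ⟨htyp, hpos, hneg⟩ := hS
  obtain ⟨i₀, hi₀⟩ : ∃ i, (S i).2 = y := by rcases hy with rfl | rfl <;> assumption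
  set A := sqnorm x₂ / 4
  set U := exp (A + 7 * D / 384 + 35 * D / 128)
  set Q := fun i ↦ sqnorm ((1 / 2 : ℝ) • (x₂ + (S i).1.2))
  set f := fun i ↦ y * ((S i).2 * exp (sqnorm ((1 / 2 : ℝ) • (y • u + (S i).1.1)) + Q i))
  have hf (i : Fin m) : f i = if (S i).2 = y then exp (D / 4 + Q i) else -exp (Q i) := by
    obtain ⟨hlabel, hx₁, -⟩ := htyp i
    simp only [f]
    rw [hx₁, label_mul_term_eq hy hlabel, hu]
  have hQ (i : Fin m) : Q i ∈ Set.Icc (A - 7 * D / 384 + 29 * D / 128)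
      (A + 7 * D / 384 + 35 * D / 128) :=
    sqnorm_half_smul_add_mem_Icc (hx₂ i) (htyp i).2.2
  have hlow (i : Fin m) : -U ≤ f i := by
    rw [hf]
    split_ifs
    · exact (neg_nonpos.2 (exp_pos _).le).trans (exp_pos _).le
    · exact neg_le_neg (exp_le_exp.2 (hQ i).2)
  have hhigh : exp (D / 6) * U ≤ f i₀ := by
    rw [hf, if_pos hi₀, ← exp_add, exp_le_exp]
    linarith [(hQ i₀).1]
  have hsum := sub_card_sub_one_mul_le_sum hhigh hlow
  have h2m : 2 * (m : ℝ) ≤ exp (D / 6) := by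
    have hm : (0 : ℝ) < m := by exact_mod_cast i₀.pos
    rw [← exp_log (by positivity : (0 : ℝ) < 2 * m), exp_le_exp]; linarith
  have hA : 0 ≤ A := div_nonneg (sqnorm_nonneg x₂) (by norm_num)
  have hU : 1 ≤ U := one_le_exp (by positivity)
  rw [Fintype.card_fin] at hsum
  rw [alg, Finset.mul_sum]
  nlinarith

lemma continuous_alg (D m : ℕ) (S : Fin m → Ex D) : Continuous (alg D m S) := by
  unfold alg; fun_prop

lemma μD_real_margin_lt_one_le {D m : ℕ} {u : Fin D → ℝ} (hu : sqnorm u = D / 4) {ε : ℝ}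
    (hε : 0 < ε) (hD₁ : 2048 * log (6 * m / ε) ≤ D) (hD₂ : 6 * log (2 * m) ≤ D)
    {S : Fin m → Ex D} (hS : S ∈ typicalSamples D m u) :
    (μD D u).real {z | z.2 * alg D m S z.1 < 1} ≤ ε := by
  set C := ⋃ i, {x : Fin D → ℝ | 7 * D / 192 ≤ |(S i).1.2 ⬝ᵥ x|}
  have hC : (noise D).real C ≤ ε / 3 := by
    refine (measureReal_iUnion_fintype_le _).trans ((Finset.sum_le_sum fun i _ ↦
      noise_real_abs_dotProduct_ge_le (hS.1 i).2.2.2).trans_eq ?_ |>.trans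
      (nat_mul_two_mul_exp_neg_le hε hD₁))
    rw [Finset.sum_const, Finset.card_univ, Fintype.card_fin, nsmul_eq_mul]
  have hmargin {y : ℝ} (hy : y = 1 ∨ y = -1) {x₂ : Fin D → ℝ} (hx₂ : x₂ ∉ C) :
      1 ≤ y * alg D m S (y • u, x₂) := by
    refine one_le_label_mul_alg hu hD₂ hS (fun i ↦ ?_) hy
    simp only [C, Set.mem_iUnion, Set.mem_ofPred_eq, not_exists, not_le] at hx₂
    rw [dotProduct_comm]
    exact (hx₂ i).le
  have hB : MeasurableSet {z : Ex D | z.2 * alg D m S z.1 < 1} :=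
    measurableSet_lt (measurable_snd.mul ((continuous_alg D m S).measurable.comp measurable_fst))
      measurable_const
  refine (μD_real_le_average_noise_real u hB (Cpos := C) (Cneg := C)
    (fun x₂ hlt ↦ ?_) (fun x₂ hlt ↦ ?_)).trans (by linarith)
  · by_contra hx₂
    have := hmargin (Or.inl rfl) hx₂
    rw [one_smul] at this
    exact lt_irrefl _ (hlt.trans_le this)
  · by_contra hx₂
    have := hmargin (Or.inr rfl) hx₂
    rw [neg_one_smul] at this
    exact lt_irrefl _ (hlt.trans_le this)

lemma ramp_zero (y' y : ℝ) : ramp 0 y' y = if y * y' ≤ 0 then 1 else 0 := by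
  unfold ramp
  split_ifs <;> first | rfl | linarith

lemma testLoss_zero_le {D : ℕ} (u : Fin D → ℝ) {h : (Fin D → ℝ) × (Fin D → ℝ) → ℝ}
    (hh : Measurable h) : testLoss D u 0 h ≤ (μD D u).real {z | z.2 * h z.1 < 1} := by
  have hs : MeasurableSet {z : Ex D | z.2 * h z.1 < 1} :=
    measurableSet_lt (by fun_prop) measurable_const
  rw [testLoss, ← integral_indicator_one hs]
  refine integral_mono_of_nonneg (ae_of_all _ fun z ↦ ?_) ((integrable_const 1).indicator hs)
    (ae_of_all _ fun z ↦ ?_)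
  · show 0 ≤ ramp 0 (h z.1) z.2
    rw [ramp_zero]; split_ifs <;> norm_num
  · show ramp 0 (h z.1) z.2 ≤ _
    rw [ramp_zero, Set.indicator_apply]
    split_ifs with h₁ h₂
    · exact le_rfl
    · exact absurd (h₁.trans_lt one_pos) h₂
    · exact zero_le_one
    · exact le_rfl

theorem test_error_small_general
    (D m : ℕ) (u : Fin D → ℝ)
    (hu : Real.sqrt (sqnorm u) = Real.sqrt D / 2)
    (ε δ : ℝ) (hε : 0 < ε) (hδ0 : 0 < δ)
    (hD1 : 2048 * Real.log (6 * m / ε) ≤ (D : ℝ))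
    (hD2 : 2048 * Real.log (6 * m / δ) ≤ (D : ℝ))
    (hD3 : 6 * Real.log (2 * m) ≤ (D : ℝ))
    (hm' : 8 * Real.log (6 / δ) < (m : ℝ)) :
    ENNReal.ofReal (1 - δ) ≤
      μS D m u {S |
        μD D u {z | z.2 * alg D m S z.1 < 1} ≤ ENNReal.ofReal ε ∧
        testLoss D u 0 (alg D m S) ≤ ε} := by
  have hu' : sqnorm u = D / 4 := by
    have h := congrArg (· ^ 2) hu
    simp only [sq_sqrt (sqnorm_nonneg u), div_pow, sq_sqrt D.cast_nonneg] at h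
    linarith
  refine (ofReal_one_sub_le_of_measureReal_compl_le
    (μS_real_typicalSamples_compl_le u hδ0 hD2 hm')).trans (measure_mono fun S hS ↦ ?_)
  have hbad := μD_real_margin_lt_one_le hu' hε hD1 hD3 hS
  exact ⟨(ENNReal.le_ofReal_iff_toReal_le (measure_ne_top _ _) hε.le).2 hbad,
    (testLoss_zero_le u (continuous_alg D m S).measurable).trans hbad⟩

/-- with probability at least `1 - δ` over the draw of the
training sample, the learned hypothesis satisfies
`Pr_{(z,y)~𝒟}[y·h_S(z) < 1] ≤ ε`; in particular its 0-1 test error is at most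
`ε`. -/
theorem test_error_small
    (D m : ℕ) (hm : 1 ≤ m) (u : Fin D → ℝ)
    (hu : Real.sqrt (sqnorm u) = Real.sqrt D / 2)
    (ε δ : ℝ) (hε : 0 < ε) (hδ0 : 0 < δ) (hδ1 : δ < 1)
    (hD1 : 2048 * Real.log (6 * m / ε) ≤ (D : ℝ))
    (hD2 : 2048 * Real.log (6 * m / δ) ≤ (D : ℝ))
    (hD3 : 6 * Real.log (2 * m) ≤ (D : ℝ))
    (hm' : 8 * Real.log (6 / δ) < (m : ℝ)) :
    ENNReal.ofReal (1 - δ) ≤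
      μS D m u {S |
        μD D u {z | z.2 * alg D m S z.1 < 1} ≤ ENNReal.ofReal ε ∧
        testLoss D u 0 (alg D m S) ≤ ε} :=
  test_error_small_general D m u hu ε δ hε hδ0 hD1 hD2 hD3 hm'

end ExpExample
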